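/- For every bounded nonempty set C ⊆ ℚ and every discount factor λ ∈ (0,1) ∩ ℚ, the discounted-sum winning condition DS_λ^{≥0} = {w ∈ C^ω : Σ_{i≥1} λ^{i−1} c_i ≥ 0} is cycle-consistent with respect to the trivial one-state skeleton: for every finite word w ∈ C*, if w₁, w₂, … ∈ C^+ are finite words each satisfying DS_λ(w wₖ^ω) < 0, then DS_λ(w w₁ w₂ …) < 0, and if each satisfies DS_λ(w wₖ^ω) ≥ 0, then DS_λ(w w₁ w₂ …) ≥ 0. -/

import Mathlib

/-- Concatenation of a finite word with an infinite word. -/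
def app {C : Type*} : List C → (ℕ → C) → (ℕ → C)
  | [], w' => w'
  | c :: u, w' => fun i =>
    match i with
    | 0 => c
    | j + 1 => app u w' j

/-- The infinite word `γ^ω` obtained by repeating a (nonempty) finite word forever. -/
def periodic {C : Type*} [Inhabited C] (γ : List C) : ℕ → C :=
  fun i => γ.getD (i % γ.length) default

/-- The infinite word obtained by concatenating the (nonempty) finite words
`ws 0, ws 1, ws 2, …`. -/
def concatSeq {C : Type*} [Inhabited C] (ws : ℕ → List C) : ℕ → C :=
  fun i => (((List.range (i + 1)).map ws).flatten).getD i default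

/-- Discounted sum `Σ_{i≥1} λ^{i-1} c_i` of an infinite word of rationals. -/
noncomputable def dsInfQ (l : ℚ) (w : ℕ → ℚ) : ℝ :=
  ∑' i : ℕ, (l : ℝ) ^ i * (w i : ℝ)

/-- Discounted sum of a finite word of rationals. -/
def dsFinQ (l : ℚ) (w : List ℚ) : ℚ :=
  ∑ i ∈ Finset.range w.length, l ^ i * w.getD i 0

lemma app_eq (u : List ℚ) (w : ℕ → ℚ) (i : ℕ) :
    app u w i = if i < u.length then u.getD i 0 else w (i - u.length) := by
  induction u generalizing i with
  | nil => simp [app]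
  | cons c u ih =>
    cases i with
    | zero => simp [app]
    | succ j => simp [app, ih, Nat.succ_sub_succ, Nat.succ_lt_succ_iff]

lemma app_append (u v : List ℚ) (w : ℕ → ℚ) : app (u ++ v) w = app u (app v w) := by
  induction u with
  | nil => simp [app]
  | cons c u ih =>
    funext i
    cases i with
    | zero => rfl
    | succ j => show app (u ++ v) w j = app u (app v w) j; rw [ih]

lemma dsFinQ_cons (l c : ℚ) (u : List ℚ) : dsFinQ l (c :: u) = c + l * dsFinQ l u := by
  unfold dsFinQ
  rw [List.length_cons, Finset.sum_range_succ', Finset.mul_sum]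
  simp only [List.getD_cons_zero, List.getD_cons_succ, pow_succ, pow_zero, one_mul]
  rw [add_comm]
  congr 1
  exact Finset.sum_congr rfl (fun x _ => by ring)

lemma dsFinQ_append (l : ℚ) (u v : List ℚ) :
    dsFinQ l (u ++ v) = dsFinQ l u + l ^ u.length * dsFinQ l v := by
  induction u with
  | nil => simp [dsFinQ]
  | cons c u ih =>
    rw [List.cons_append, dsFinQ_cons, dsFinQ_cons, ih, List.length_cons]
    ring

lemma summable_ds {l : ℚ} (hl0 : 0 < l) (hl1 : l < 1) (w : ℕ → ℚ) (B : ℝ)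
    (hb : ∀ i, |(w i : ℝ)| ≤ B) :
    Summable (fun i => (l : ℝ) ^ i * (w i : ℝ)) := by
  have hl0' : (0:ℝ) < (l:ℝ) := by exact_mod_cast hl0
  have hl1' : (l:ℝ) < 1 := by exact_mod_cast hl1
  apply Summable.of_norm
  apply Summable.of_nonneg_of_le (fun i => norm_nonneg _) (fun i => ?_)
    ((summable_geometric_of_lt_one hl0'.le hl1').mul_right B)
  rw [norm_mul, norm_pow, Real.norm_eq_abs, Real.norm_eq_abs, abs_of_pos hl0']
  exact mul_le_mul_of_nonneg_left (hb i) (by positivity)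

lemma app_bound (u : List ℚ) (w : ℕ → ℚ) (B : ℝ) (hu : ∀ c ∈ u, |(c : ℝ)| ≤ B)
    (hb : ∀ i, |(w i : ℝ)| ≤ B) : ∀ i, |((app u w i : ℚ) : ℝ)| ≤ B := by
  intro i
  rw [app_eq]
  split
  · next h =>
    rw [List.getD_eq_getElem u 0 h]
    exact hu _ (List.getElem_mem h)
  · exact hb _

lemma dsInfQ_shift {l : ℚ} (f : ℕ → ℚ) (hsum : Summable (fun i => (l : ℝ) ^ i * (f i : ℝ))) :
    dsInfQ l f = (f 0 : ℝ) + l * dsInfQ l (fun i => f (i + 1)) := by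
  unfold dsInfQ
  rw [Summable.tsum_eq_zero_add hsum]
  simp only [pow_zero, one_mul, pow_succ]
  rw [← tsum_mul_left]
  congr 1
  exact tsum_congr fun i => by ring

lemma dsInfQ_app {l : ℚ} (hl0 : 0 < l) (hl1 : l < 1) (u : List ℚ) (w : ℕ → ℚ) (B : ℝ)
    (hu : ∀ c ∈ u, |(c : ℝ)| ≤ B) (hb : ∀ i, |(w i : ℝ)| ≤ B) :
    dsInfQ l (app u w) = (dsFinQ l u : ℝ) + (l : ℝ) ^ u.length * dsInfQ l w := by
  induction u with
  | nil => simp [app, dsFinQ]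
  | cons c u ih =>
    have hsum := summable_ds hl0 hl1 (app (c :: u) w) B (app_bound _ _ _ hu hb)
    have h1 : dsInfQ l (app (c :: u) w) = (c : ℝ) + l * dsInfQ l (app u w) := by
      have := dsInfQ_shift (l := l) (app (c :: u) w) hsum
      simpa [app] using this
    rw [h1, ih (fun d hd => hu d (List.mem_cons_of_mem _ hd)), dsFinQ_cons]
    rw [List.length_cons]
    push_cast
    ring

lemma periodic_eq_app (γ : List ℚ) : periodic γ = app γ (periodic γ) := by
  funext i
  rw [app_eq]
  split
  · next h => simp [periodic, Nat.mod_eq_of_lt h, default]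
  · next h =>
    push_neg at h
    simp only [periodic]
    rw [Nat.mod_eq_sub_mod h]

lemma periodic_bound (γ : List ℚ) (hγ : γ ≠ []) (B : ℝ) (hu : ∀ c ∈ γ, |(c : ℝ)| ≤ B) :
    ∀ i, |((periodic γ i : ℚ) : ℝ)| ≤ B := by
  intro i
  have h : i % γ.length < γ.length := Nat.mod_lt _ (List.length_pos_iff.mpr hγ)
  simp only [periodic]
  rw [show (default : ℚ) = 0 from rfl, List.getD_eq_getElem γ 0 h]
  exact hu _ (List.getElem_mem h)

lemma dsInfQ_periodic {l : ℚ} (hl0 : 0 < l) (hl1 : l < 1) (γ : List ℚ) (hγ : γ ≠ [])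
    (B : ℝ) (hu : ∀ c ∈ γ, |(c : ℝ)| ≤ B) :
    dsInfQ l (periodic γ) = (dsFinQ l γ : ℝ) / (1 - (l : ℝ) ^ γ.length) := by
  have hlt : (l : ℝ) ^ γ.length < 1 := by
    apply pow_lt_one₀ (by positivity) (by exact_mod_cast hl1) (by
      simpa using List.length_pos_iff.mpr hγ |>.ne')
  have key : dsInfQ l (periodic γ)
      = (dsFinQ l γ : ℝ) + (l : ℝ) ^ γ.length * dsInfQ l (periodic γ) := by
    conv_lhs => rw [periodic_eq_app γ]
    exact dsInfQ_app hl0 hl1 γ _ B hu (periodic_bound γ hγ B hu)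
  have h1 : (1 - (l : ℝ) ^ γ.length) ≠ 0 := by linarith
  field_simp
  linarith [key]

lemma flatten_len (ws : ℕ → List ℚ) (hws : ∀ k, ws k ≠ []) (n : ℕ) :
    n ≤ ((List.range n).map ws).flatten.length := by
  induction n with
  | zero => simp
  | succ n ih =>
    rw [List.range_succ, List.map_append, List.flatten_append, List.length_append]
    have := List.length_pos_iff.mpr (hws n)
    simp only [List.map_cons, List.map_nil, List.flatten_cons, List.flatten_nil,
      List.append_nil]
    omega

lemma concat_stable (ws : ℕ → List ℚ) (hws : ∀ k, ws k ≠ []) (i n : ℕ) (h : i + 1 ≤ n) :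
    ((List.range n).map ws).flatten.getD i (0:ℚ) = concatSeq ws i := by
  induction n with
  | zero => omega
  | succ n ih =>
    rcases Nat.lt_or_ge (i+1) (n+1) with h' | h'
    · rw [List.range_succ, List.map_append, List.flatten_append]
      rw [List.getD_append _ _ _ _ (lt_of_lt_of_le (by omega) (flatten_len ws hws n))]
      exact ih (by omega)
    · have : n = i := by omega
      subst this
      rfl

lemma concatSeq_cons (ws : ℕ → List ℚ) (hws : ∀ k, ws k ≠ []) :
    concatSeq ws = app (ws 0) (concatSeq fun k => ws (k + 1)) := by
  funext i
  have hsplit : ((List.range (i+1)).map ws).flatten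
      = ws 0 ++ ((List.range i).map (fun k => ws (k + 1))).flatten := by
    rw [List.range_succ_eq_map, List.map_cons, List.flatten_cons, List.map_map]
    rfl
  rw [app_eq]
  split
  · next h =>
    show ((List.range (i+1)).map ws).flatten.getD i default = _
    rw [hsplit, show (default : ℚ) = 0 from rfl, List.getD_append _ _ _ _ h]
  · next h =>
    push_neg at h
    have h1 : 0 < (ws 0).length := List.length_pos_iff.mpr (hws 0)
    show ((List.range (i+1)).map ws).flatten.getD i default = _
    rw [hsplit, show (default : ℚ) = 0 from rfl, List.getD_append_right _ _ _ _ h]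
    have hws' : ∀ k, (fun k => ws (k + 1)) k ≠ [] := fun k => hws (k+1)
    rw [concat_stable _ hws' _ i (by omega)]

lemma concatSeq_bound (ws : ℕ → List ℚ) (hws : ∀ k, ws k ≠ []) (B : ℝ)
    (h : ∀ k, ∀ c ∈ ws k, |(c : ℝ)| ≤ B) :
    ∀ i, |((concatSeq ws i : ℚ) : ℝ)| ≤ B := by
  intro i
  have hlen : i < ((List.range (i+1)).map ws).flatten.length :=
    lt_of_lt_of_le (Nat.lt_succ_self i) (flatten_len ws hws (i+1))
  show |((((List.range (i + 1)).map ws).flatten.getD i default : ℚ) : ℝ)| ≤ B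
  rw [show (default : ℚ) = 0 from rfl, List.getD_eq_getElem _ 0 hlen]
  have hmem := List.getElem_mem hlen
  rw [List.mem_flatten] at hmem
  obtain ⟨t, ht, hct⟩ := hmem
  rw [List.mem_map] at ht
  obtain ⟨k, _, rfl⟩ := ht
  exact h k _ hct

lemma app_concat_decomp (w : List ℚ) (ws : ℕ → List ℚ) (hws : ∀ k, ws k ≠ []) (n : ℕ) :
    app w (concatSeq ws)
      = app (w ++ ((List.range n).map ws).flatten) (concatSeq fun k => ws (k + n)) := by
  induction n with
  | zero => simp
  | succ n ih =>
    rw [ih, List.range_succ, List.map_append, List.flatten_append]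
    simp only [List.map_cons, List.map_nil, List.flatten_cons, List.flatten_nil,
      List.append_nil]
    rw [← List.append_assoc, app_append (w ++ ((List.range n).map ws).flatten)]
    congr 1
    rw [concatSeq_cons (fun k => ws (k + n)) (fun k => hws (k + n))]
    simp only [Nat.zero_add]
    have h2 : (fun k => ws (k + 1 + n)) = (fun k => ws (k + (n + 1))) := by
      funext k; congr 1; omega
    rw [h2]

lemma abs_dsInfQ_le {l : ℚ} (hl0 : 0 < l) (hl1 : l < 1) (v : ℕ → ℚ) (B : ℝ)
    (hb : ∀ i, |((v i : ℚ) : ℝ)| ≤ B) : |dsInfQ l v| ≤ B / (1 - (l : ℝ)) := by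
  have hl0' : (0:ℝ) < (l:ℝ) := by exact_mod_cast hl0
  have hl1' : (l:ℝ) < 1 := by exact_mod_cast hl1
  have hs := summable_ds hl0 hl1 v B hb
  have habs : Summable (fun i => |(l : ℝ) ^ i * (v i : ℝ)|) := hs.abs
  have h1 : |dsInfQ l v| ≤ ∑' i, |(l : ℝ) ^ i * (v i : ℝ)| := by
    unfold dsInfQ
    simpa only [Real.norm_eq_abs] using
      norm_tsum_le_tsum_norm (f := fun i => (l : ℝ) ^ i * (v i : ℝ))
        (by simpa only [Real.norm_eq_abs] using habs)
  have h2 : ∑' i, |(l : ℝ) ^ i * (v i : ℝ)| ≤ ∑' i : ℕ, B * (l : ℝ) ^ i := by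
    apply Summable.tsum_le_tsum _ habs ((summable_geometric_of_lt_one hl0'.le hl1').mul_left B)
    intro i
    rw [abs_mul, abs_pow, abs_of_pos hl0', mul_comm]
    exact mul_le_mul_of_nonneg_right (hb i) (by positivity)
  have h3 : ∑' i : ℕ, B * (l : ℝ) ^ i = B / (1 - (l : ℝ)) := by
    rw [tsum_mul_left, tsum_geometric_of_lt_one hl0'.le hl1']
    ring
  linarith

lemma core {l : ℚ} (hl0 : 0 < l) (hl1 : l < 1) (B' : ℝ) (hB0 : 0 ≤ B')
    (w : List ℚ) (hwb : ∀ c ∈ w, |(c : ℝ)| ≤ B')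
    (ws : ℕ → List ℚ) (hwsne : ∀ k, ws k ≠ [])
    (hwsb : ∀ k, ∀ c ∈ ws k, |(c : ℝ)| ≤ B') :
    ((∀ k, dsInfQ l (app w (periodic (ws k))) ≤ 0) →
      dsInfQ l (app w (concatSeq ws)) ≤ 0) ∧
    ((∀ k, 0 ≤ dsInfQ l (app w (periodic (ws k)))) →
      0 ≤ dsInfQ l (app w (concatSeq ws))) := by
  have hL0 : (0:ℝ) < (l:ℝ) := by exact_mod_cast hl0
  have hL1 : (l:ℝ) < 1 := by exact_mod_cast hl1
  set L : ℝ := (l : ℝ) with hLdef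
  set M : ℝ := B' / (1 - L) with hMdef
  have hM0 : 0 ≤ M := by
    apply div_nonneg hB0; linarith
  set a : ℝ := (dsFinQ l w : ℝ) with hadef
  set m : ℕ := w.length with hmdef
  set P : ℕ → List ℚ := fun n => w ++ ((List.range n).map ws).flatten with hPdef
  set Λ : ℕ → ℕ := fun n => (((List.range n).map ws).flatten).length with hΛdef
  have hΛge : ∀ n, n ≤ Λ n := fun n => flatten_len ws hwsne n
  have hPb : ∀ n, ∀ c ∈ P n, |(c : ℝ)| ≤ B' := by
    intro n c hc
    rcases List.mem_append.mp hc with h | h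
    · exact hwb c h
    · rw [List.mem_flatten] at h
      obtain ⟨t, ht, hct⟩ := h
      rw [List.mem_map] at ht
      obtain ⟨k, _, rfl⟩ := ht
      exact hwsb k c hct
  have hTb : ∀ n i, |((concatSeq (fun k => ws (k + n)) i : ℚ) : ℝ)| ≤ B' := fun n =>
    concatSeq_bound _ (fun k => hwsne (k + n)) B' (fun k => hwsb (k + n))
  set T : ℕ → ℝ := fun n => dsInfQ l (concatSeq fun k => ws (k + n)) with hTdef
  have hTM : ∀ n, |T n| ≤ M := fun n => abs_dsInfQ_le hl0 hl1 _ B' (hTb n)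
  have hdecomp : ∀ n, dsInfQ l (app w (concatSeq ws))
      = (dsFinQ l (P n) : ℝ) + L ^ (m + Λ n) * T n := by
    intro n
    rw [app_concat_decomp w ws hwsne n,
      dsInfQ_app hl0 hl1 _ _ B' (hPb n) (hTb n)]
    have hlen : (P n).length = m + Λ n := by simp [hPdef, hΛdef, hmdef]
    rw [hlen]
  have hden : ∀ k, 0 < 1 - L ^ (ws k).length := by
    intro k
    have : L ^ (ws k).length < 1 :=
      pow_lt_one₀ hL0.le hL1 (by simpa using List.length_pos_iff.mpr (hwsne k) |>.ne')
    linarith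
  have hcond : ∀ k, dsInfQ l (app w (periodic (ws k)))
      = a + L ^ m * ((dsFinQ l (ws k) : ℝ) / (1 - L ^ (ws k).length)) := by
    intro k
    rw [dsInfQ_app hl0 hl1 w _ B' hwb (periodic_bound _ (hwsne k) _ (hwsb k)),
      dsInfQ_periodic hl0 hl1 _ (hwsne k) B' (hwsb k)]
  have hPsucc : ∀ n, P (n + 1) = P n ++ ws n := by
    intro n
    simp only [hPdef, List.range_succ, List.map_append, List.flatten_append,
      List.map_cons, List.map_nil, List.flatten_cons, List.flatten_nil, List.append_nil,
      List.append_assoc]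
  have hΛsucc : ∀ n, Λ (n + 1) = Λ n + (ws n).length := by
    intro n
    simp only [hΛdef, List.range_succ, List.map_append, List.flatten_append,
      List.map_cons, List.map_nil, List.flatten_cons, List.flatten_nil, List.append_nil,
      List.length_append]
  have hScast : ∀ n, (dsFinQ l (P n) : ℝ) ≤ 0 ∨ True := fun _ => Or.inr trivial
  have hSsucc : ∀ n, (dsFinQ l (P (n + 1)) : ℝ)
      = (dsFinQ l (P n) : ℝ) + L ^ m * L ^ (Λ n) * (dsFinQ l (ws n) : ℝ) := by
    intro n
    have hh : (P n).length = m + Λ n := by simp [hPdef, hΛdef, hmdef]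
    rw [hPsucc n, dsFinQ_append, hh]
    push_cast [pow_add]
    ring
  have hlim : Filter.Tendsto (fun n => (|a| + M) * L ^ n) Filter.atTop (nhds 0) := by
    have h := tendsto_pow_atTop_nhds_zero_of_lt_one hL0.le hL1
    simpa using h.const_mul (|a| + M)
  have hlim' : Filter.Tendsto (fun n => -((|a| + M) * L ^ n)) Filter.atTop (nhds 0) := by
    simpa using hlim.neg
  constructor
  · intro hyp
    have key : ∀ n, (dsFinQ l (P n) : ℝ) ≤ a * L ^ (Λ n) := by
      intro n
      induction n with
      | zero => simp [hPdef, hΛdef, hadef]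
      | succ n ih =>
        have h1 := hyp n
        rw [hcond n] at h1
        set D : ℝ := 1 - L ^ (ws n).length with hDdef
        set q : ℝ := (dsFinQ l (ws n) : ℝ) / D with hqdef
        have hD : 0 < D := hden n
        have hq : (dsFinQ l (ws n) : ℝ) = q * D := by
          rw [hqdef, div_mul_cancel₀ _ hD.ne']
        have hstep : (a + L ^ m * q) * (L ^ (Λ n) * D) ≤ 0 :=
          mul_nonpos_of_nonpos_of_nonneg h1 (by positivity)
        have hDeq : L ^ (ws n).length = 1 - D := by rw [hDdef]; ring
        rw [hSsucc n, hΛsucc n, hq, pow_add, hDeq]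
        nlinarith [pow_pos hL0 (Λ n), pow_pos hL0 m]
    have hbound : ∀ n, dsInfQ l (app w (concatSeq ws)) ≤ (|a| + M) * L ^ n := by
      intro n
      rw [hdecomp n]
      have h1 := key n
      have h2 : L ^ (m + Λ n) * T n ≤ L ^ (Λ n) * M := by
        have hTn := hTM n
        have hp1 : L ^ (m + Λ n) ≤ L ^ (Λ n) := by
          rw [pow_add]
          have : L ^ m ≤ 1 := pow_le_one₀ hL0.le hL1.le
          nlinarith [pow_pos hL0 (Λ n)]
        have := abs_le.mp hTn
        nlinarith [pow_pos hL0 (m + Λ n), pow_pos hL0 (Λ n)]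
      have h3 : L ^ (Λ n) ≤ L ^ n := pow_le_pow_of_le_one hL0.le hL1.le (hΛge n)
      have h4 : a * L ^ (Λ n) ≤ |a| * L ^ n := by
        have : a ≤ |a| := le_abs_self a
        nlinarith [pow_pos hL0 (Λ n), abs_nonneg a]
      nlinarith [pow_pos hL0 (Λ n)]
    exact ge_of_tendsto' hlim hbound
  · intro hyp
    have key : ∀ n, a * L ^ (Λ n) ≤ (dsFinQ l (P n) : ℝ) := by
      intro n
      induction n with
      | zero => simp [hPdef, hΛdef, hadef]
      | succ n ih =>
        have h1 := hyp n
        rw [hcond n] at h1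
        set D : ℝ := 1 - L ^ (ws n).length with hDdef
        set q : ℝ := (dsFinQ l (ws n) : ℝ) / D with hqdef
        have hD : 0 < D := hden n
        have hq : (dsFinQ l (ws n) : ℝ) = q * D := by
          rw [hqdef, div_mul_cancel₀ _ hD.ne']
        have hstep : 0 ≤ (a + L ^ m * q) * (L ^ (Λ n) * D) :=
          mul_nonneg h1 (by positivity)
        have hDeq : L ^ (ws n).length = 1 - D := by rw [hDdef]; ring
        rw [hSsucc n, hΛsucc n, hq, pow_add, hDeq]
        nlinarith [pow_pos hL0 (Λ n), pow_pos hL0 m]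
    have hbound : ∀ n, -((|a| + M) * L ^ n) ≤ dsInfQ l (app w (concatSeq ws)) := by
      intro n
      rw [hdecomp n]
      have h1 := key n
      have h2 : -(L ^ (Λ n) * M) ≤ L ^ (m + Λ n) * T n := by
        have hTn := hTM n
        have hp1 : L ^ (m + Λ n) ≤ L ^ (Λ n) := by
          rw [pow_add]
          have : L ^ m ≤ 1 := pow_le_one₀ hL0.le hL1.le
          nlinarith [pow_pos hL0 (Λ n)]
        have := abs_le.mp hTn
        nlinarith [pow_pos hL0 (m + Λ n), pow_pos hL0 (Λ n)]
      have h3 : L ^ (Λ n) ≤ L ^ n := pow_le_pow_of_le_one hL0.le hL1.le (hΛge n)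
      have h4 : -(|a| * L ^ n) ≤ a * L ^ (Λ n) := by
        have : -|a| ≤ a := neg_abs_le a
        nlinarith [pow_pos hL0 (Λ n), abs_nonneg a]
      nlinarith [pow_pos hL0 (Λ n)]
    exact le_of_tendsto' hlim' hbound

/-- the discounted-sum condition `DS_λ^{≥0}` over a bounded set of rational
colors is cycle-consistent with respect to the trivial one-state skeleton. -/
theorem stmt8 (Cs : Set ℚ) (hne : Cs.Nonempty) (B : ℚ) (hB : ∀ c ∈ Cs, |c| ≤ B)
    (l : ℚ) (h0 : 0 < l) (h1 : l < 1)
    (w : List ℚ) (hw : ∀ c ∈ w, c ∈ Cs)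
    (ws : ℕ → List ℚ) (hwsne : ∀ k, ws k ≠ []) (hwsC : ∀ k, ∀ c ∈ ws k, c ∈ Cs) :
    ((∀ k, dsInfQ l (app w (periodic (ws k))) < 0) →
      dsInfQ l (app w (concatSeq ws)) < 0) ∧
    ((∀ k, 0 ≤ dsInfQ l (app w (periodic (ws k)))) →
      0 ≤ dsInfQ l (app w (concatSeq ws))) := by
  have hL0 : (0:ℝ) < (l:ℝ) := by exact_mod_cast h0
  have hL1 : (l:ℝ) < 1 := by exact_mod_cast h1
  set B' : ℝ := max (B : ℝ) 0 with hB'def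
  have hB0 : 0 ≤ B' := le_max_right _ _
  have hBmem : ∀ c ∈ Cs, |((c : ℚ) : ℝ)| ≤ B' := by
    intro c hc
    have := hB c hc
    have h2 : |((c : ℚ) : ℝ)| ≤ (B : ℝ) := by exact_mod_cast this
    exact le_trans h2 (le_max_left _ _)
  have hwb : ∀ c ∈ w, |((c : ℚ) : ℝ)| ≤ B' := fun c hc => hBmem c (hw c hc)
  have hwsb : ∀ k, ∀ c ∈ ws k, |((c : ℚ) : ℝ)| ≤ B' := fun k c hc => hBmem c (hwsC k c hc)
  constructor
  · intro hyp
    -- one-step unfolding: DS = dsFinQ (w ++ ws 0) + L^(m + l0) * T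
    set L : ℝ := (l : ℝ)
    set m : ℕ := w.length with hmdef
    set l0 : ℕ := (ws 0).length with hl0def
    set a : ℝ := (dsFinQ l w : ℝ) with hadef
    set d0 : ℝ := (dsFinQ l (ws 0) : ℝ) with hd0def
    have hshiftne : ∀ k, ws (k + 1) ≠ [] := fun k => hwsne (k + 1)
    have hshiftb : ∀ k, ∀ c ∈ ws (k + 1), |((c : ℚ) : ℝ)| ≤ B' := fun k => hwsb (k + 1)
    have hTb : ∀ i, |((concatSeq (fun k => ws (k + 1)) i : ℚ) : ℝ)| ≤ B' :=
      concatSeq_bound _ hshiftne B' hshiftb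
    set T : ℝ := dsInfQ l (concatSeq fun k => ws (k + 1)) with hTdef
    have hsplit : app w (concatSeq ws) = app (w ++ ws 0) (concatSeq fun k => ws (k + 1)) := by
      rw [concatSeq_cons ws hwsne, app_append]
    have hwws0b : ∀ c ∈ w ++ ws 0, |((c : ℚ) : ℝ)| ≤ B' := by
      intro c hc
      rcases List.mem_append.mp hc with h | h
      · exact hwb c h
      · exact hwsb 0 c h
    have hDS : dsInfQ l (app w (concatSeq ws))
        = a + L ^ m * d0 + L ^ m * L ^ l0 * T := by
      rw [hsplit, dsInfQ_app h0 h1 _ _ B' hwws0b hTb, dsFinQ_append, List.length_append,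
        pow_add]
      push_cast
      ring
    -- core bound on the tail
    have hcore := (core h0 h1 B' hB0 w hwb (fun k => ws (k + 1)) hshiftne hshiftb).1
      (fun k => (hyp (k + 1)).le)
    have hDS' : dsInfQ l (app w (concatSeq fun k => ws (k + 1))) = a + L ^ m * T := by
      rw [dsInfQ_app h0 h1 _ _ B' hwb hTb]
    rw [hDS'] at hcore
    -- condition for block 0
    have hD0 : 0 < 1 - L ^ l0 := by
      have : L ^ l0 < 1 :=
        pow_lt_one₀ hL0.le hL1 (by simpa [hl0def] using List.length_pos_iff.mpr (hwsne 0) |>.ne')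
      linarith
    have h1c := hyp 0
    rw [dsInfQ_app h0 h1 w _ B' hwb (periodic_bound _ (hwsne 0) _ (hwsb 0)),
      dsInfQ_periodic h0 h1 _ (hwsne 0) B' (hwsb 0)] at h1c
    set D0 : ℝ := 1 - L ^ l0 with hD0def
    set q0 : ℝ := d0 / D0 with hq0def
    have hd0q : d0 = q0 * D0 := by rw [hq0def, div_mul_cancel₀ _ hD0.ne']
    have hstep : (a + L ^ m * q0) * D0 < 0 := mul_neg_of_neg_of_pos h1c hD0
    have hLl0 : L ^ l0 = 1 - D0 := by rw [hD0def]; ring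
    have hTle : L ^ l0 * (L ^ m * T) ≤ L ^ l0 * (-a) := by
      apply mul_le_mul_of_nonneg_left _ (by positivity)
      linarith [hcore]
    rw [hLl0] at hTle
    rw [hDS, hd0q, hLl0]
    nlinarith [pow_pos hL0 m, hTle, hstep]
  · intro hyp
    exact (core h0 h1 B' hB0 w hwb ws hwsne hwsb).2 hyp
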